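/- Let A be a symplectic linear automorphism of (E, ω), and suppose E = E^u ⊕ E^s is an A-invariant splitting such that for some C > 0 and λ ∈ (0,1), ‖A^n|_{E^s}‖ ≤ C λ^n and ‖A^{-n}|_{E^u}‖ ≤ C λ^n for all n ≥ 0. Then ω vanishes identically on E^s × E^s and on E^u × E^u (the stable and unstable subspaces are ω-isotropic). -/
import Mathlib

/-- In finite dimensions, any bilinear form is bounded. -/
lemma bilin_bound {E : Type*} [NormedAddCommGroup E] [NormedSpace ℝ E]
    [FiniteDimensional ℝ E] (ω : LinearMap.BilinForm ℝ E) :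
    ∃ M : ℝ, 0 ≤ M ∧ ∀ v w : E, |ω v w| ≤ M * ‖v‖ * ‖w‖ := by
  let g : E →ₗ[ℝ] (E →L[ℝ] ℝ) :=
    { toFun := fun v => LinearMap.toContinuousLinearMap (ω v)
      map_add' := by intro x y; ext z; simp
      map_smul' := by intro c x; ext z; simp }
  let F := LinearMap.toContinuousLinearMap g
  refine ⟨‖F‖, norm_nonneg F, fun v w => ?_⟩
  have h1 : |ω v w| = ‖F v w‖ := by simp [F, g]
  rw [h1]
  calc ‖F v w‖ ≤ ‖F v‖ * ‖w‖ := (F v).le_opNorm w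
  _ ≤ ‖F‖ * ‖v‖ * ‖w‖ := by
      gcongr
      exact F.le_opNorm v

/-- For a symplectic automorphism with a hyperbolic splitting, the stable and
unstable subspaces are isotropic for the symplectic form. -/
theorem symplectic_hyperbolic_splitting_isotropic
    {E : Type*} [NormedAddCommGroup E] [NormedSpace ℝ E] [FiniteDimensional ℝ E]
    (ω : LinearMap.BilinForm ℝ E) (halt : ∀ v : E, ω v v = 0)
    (hnd : ω.Nondegenerate)
    (A : E ≃L[ℝ] E) (hA : ∀ v w : E, ω (A v) (A w) = ω v w)
    (Eu Es : Submodule ℝ E) (hcompl : IsCompl Eu Es)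
    (hinvu : Eu.map (A : E →ₗ[ℝ] E) = Eu)
    (hinvs : Es.map (A : E →ₗ[ℝ] E) = Es)
    (C lam : ℝ) (hC : 0 < C) (hlam0 : 0 < lam) (hlam1 : lam < 1)
    (hs : ∀ n : ℕ, ∀ v ∈ Es, ‖(A ^ n) v‖ ≤ C * lam ^ n * ‖v‖)
    (hu : ∀ n : ℕ, ∀ v ∈ Eu, ‖(A⁻¹ ^ n) v‖ ≤ C * lam ^ n * ‖v‖) :
    (∀ v ∈ Es, ∀ w ∈ Es, ω v w = 0) ∧ (∀ v ∈ Eu, ∀ w ∈ Eu, ω v w = 0) := by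
  obtain ⟨M, hM0, hM⟩ := bilin_bound ω
  -- invariance of ω under A⁻¹
  have hAinv : ∀ v w : E, ω (A⁻¹ v) (A⁻¹ w) = ω v w := by
    intro v w
    have h := hA (A⁻¹ v) (A⁻¹ w)
    have e : ∀ u : E, A (A⁻¹ u) = u := fun u => A.apply_symm_apply u
    rw [e, e] at h; exact h.symm
  -- invariance under powers
  have hApow : ∀ n : ℕ, ∀ v w : E, ω ((A ^ n) v) ((A ^ n) w) = ω v w := by
    intro n
    induction n with
    | zero => intro v w; rfl
    | succ n ih =>
        intro v w
        have h : ∀ u : E, (A ^ (n+1)) u = (A ^ n) (A u) := by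
          intro u; rw [pow_succ]; rfl
        rw [h, h, ih, hA]
  have hAinvpow : ∀ n : ℕ, ∀ v w : E, ω ((A⁻¹ ^ n) v) ((A⁻¹ ^ n) w) = ω v w := by
    intro n
    induction n with
    | zero => intro v w; rfl
    | succ n ih =>
        intro v w
        have h : ∀ u : E, (A⁻¹ ^ (n+1)) u = (A⁻¹ ^ n) (A⁻¹ u) := by
          intro u; rw [pow_succ]; rfl
        rw [h, h, ih, hAinv]
  -- the key decay argument
  have key : ∀ (v w : E), (∀ n : ℕ, |ω v w| ≤ M * (C * lam ^ n * ‖v‖) * (C * lam ^ n * ‖w‖)) →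
      ω v w = 0 := by
    intro v w hbound
    have hsq : (0:ℝ) ≤ lam ^ 2 := sq_nonneg lam
    have hsq1 : lam ^ 2 < 1 := by nlinarith
    have htend : Filter.Tendsto (fun n : ℕ => (M * C * ‖v‖ * C * ‖w‖) * (lam ^ 2) ^ n)
        Filter.atTop (nhds 0) := by
      have := tendsto_pow_atTop_nhds_zero_of_lt_one hsq hsq1
      simpa using this.const_mul (M * C * ‖v‖ * C * ‖w‖)
    have hle : ∀ n : ℕ, |ω v w| ≤ (M * C * ‖v‖ * C * ‖w‖) * (lam ^ 2) ^ n := by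
      intro n
      have := hbound n
      calc |ω v w| ≤ M * (C * lam ^ n * ‖v‖) * (C * lam ^ n * ‖w‖) := this
      _ = (M * C * ‖v‖ * C * ‖w‖) * (lam ^ 2) ^ n := by ring
    have := ge_of_tendsto' htend (fun n => hle n)
    have : |ω v w| ≤ 0 := this
    have := abs_nonpos_iff.mp this
    exact this
  constructor
  · intro v hv w hw
    apply key
    intro n
    rw [← hApow n v w]
    calc |ω ((A ^ n) v) ((A ^ n) w)| ≤ M * ‖(A ^ n) v‖ * ‖(A ^ n) w‖ := hM _ _
    _ ≤ M * (C * lam ^ n * ‖v‖) * (C * lam ^ n * ‖w‖) := by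
        gcongr
        · exact hs n v hv
        · exact hs n w hw
  · intro v hv w hw
    apply key
    intro n
    rw [← hAinvpow n v w]
    calc |ω ((A⁻¹ ^ n) v) ((A⁻¹ ^ n) w)| ≤ M * ‖(A⁻¹ ^ n) v‖ * ‖(A⁻¹ ^ n) w‖ := hM _ _
    _ ≤ M * (C * lam ^ n * ‖v‖) * (C * lam ^ n * ‖w‖) := by
        gcongr
        · exact hu n v hv
        · exact hu n w hw
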